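/- Let n ≥ 2 and c > 0 satisfy ‖μ_{0,0}(Ψ)‖ ≥ c‖Ψ‖² for all Ψ ∈ ℂ² ⊗ ℂⁿ. Then for all τ ≥ 0 and all Ψ, ⟨μ_{0,τ}(Ψ)Ψ, Ψ⟩ ≥ c²‖Ψ‖⁴. -/

import Mathlib

open Matrix BigOperators


/-- Kronecker-type tensor product of a `2×2` and an `n×n` matrix, viewed as an
endomorphism of `ℂ² ⊗ ℂⁿ` (indexed by `Fin 2 × Fin n`). -/
def tens {n : ℕ} (B : Matrix (Fin 2) (Fin 2) ℂ) (C : Matrix (Fin n) (Fin n) ℂ) :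
    Matrix (Fin 2 × Fin n) (Fin 2 × Fin n) ℂ :=
  fun p q => B p.1 q.1 * C p.2 q.2

/-- Normalised partial trace over the `ℂⁿ` factor. -/
noncomputable def ptr2 {n : ℕ} (A : Matrix (Fin 2 × Fin n) (Fin 2 × Fin n) ℂ) :
    Matrix (Fin 2) (Fin 2) ℂ :=
  fun i j => (1 / (n : ℂ)) * ∑ k, A (i, k) (j, k)

/-- Normalised partial trace over the `ℂ²` factor. -/
noncomputable def ptr1 {n : ℕ} (A : Matrix (Fin 2 × Fin n) (Fin 2 × Fin n) ℂ) :
    Matrix (Fin n) (Fin n) ℂ :=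
  fun k l => ((1 : ℂ) / 2) * ∑ i, A (i, k) (i, l)

/-- Orthogonal projection `Q` of `gl(ℂ² ⊗ ℂⁿ)` onto `sl(ℂ²) ⊗ ℂ·id`. -/
noncomputable def Qproj {n : ℕ} (A : Matrix (Fin 2 × Fin n) (Fin 2 × Fin n) ℂ) :
    Matrix (Fin 2 × Fin n) (Fin 2 × Fin n) ℂ :=
  tens (ptr2 A - (((1 : ℂ) / 2) * (ptr2 A).trace) • (1 : Matrix (Fin 2) (Fin 2) ℂ))
    (1 : Matrix (Fin n) (Fin n) ℂ)

/-- Orthogonal projection `P` of `gl(ℂ² ⊗ ℂⁿ)` onto `sl(ℂ²) ⊗ sl(ℂⁿ)`. -/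
noncomputable def Pproj {n : ℕ} (A : Matrix (Fin 2 × Fin n) (Fin 2 × Fin n) ℂ) :
    Matrix (Fin 2 × Fin n) (Fin 2 × Fin n) ℂ :=
  A - tens (ptr2 A) (1 : Matrix (Fin n) (Fin n) ℂ)
    - tens (1 : Matrix (Fin 2) (Fin 2) ℂ) (ptr1 A)
    + ((1 / (2 * (n : ℂ))) * A.trace) • (1 : Matrix (Fin 2 × Fin n) (Fin 2 × Fin n) ℂ)

/-- Frobenius (Hilbert–Schmidt) norm. -/
noncomputable def frobNorm {m : Type*} [Fintype m] (A : Matrix m m ℂ) : ℝ :=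
  Real.sqrt (∑ i, ∑ j, ‖A i j‖ ^ 2)

/-!
Since `⟨MΨ, Ψ⟩ = ⟨M, ΨΨ*⟩_HS`, the quantity to bound is `⟨P X + τ Q X, X⟩_HS` with `X = ΨΨ*`.
Both `P` and `Q` are orthogonal projections, so this equals `‖P X‖² + τ ‖Q X‖² ≥ ‖P X‖²`, and
squaring the hypothesis gives `‖P X‖² ≥ c² ‖Ψ‖⁴`. Orthogonality is checked through partial
traces: pairing with `B ⊗ 1` (resp. `1 ⊗ D`) only sees the partial trace over `ℂⁿ` (resp. `ℂ²`),
both partial traces of `P A` vanish, and `A - P A` lies in `gl(ℂ²) ⊗ 1 + 1 ⊗ gl(ℂⁿ)`; for `Q`,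
`ptr2 (A - Q A)` is a multiple of the identity, hence orthogonal to the traceless `ptr2 (Q A)`.
-/

open ComplexConjugate

section HilbertSchmidt

variable {m k : Type*} [Fintype m] [Fintype k]

noncomputable def hsInner (A B : Matrix m k ℂ) : ℂ :=
  ∑ i, ∑ j, A i j * conj (B i j)

lemma hsInner_add_left (A B C : Matrix m k ℂ) :
    hsInner (A + B) C = hsInner A C + hsInner B C := by
  simp [hsInner, add_mul, Finset.sum_add_distrib]

lemma hsInner_smul_left (c : ℂ) (A B : Matrix m k ℂ) :
    hsInner (c • A) B = c * hsInner A B := by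
  simp [hsInner, Finset.mul_sum, mul_assoc]

lemma hsInner_add_right (A B C : Matrix m k ℂ) :
    hsInner A (B + C) = hsInner A B + hsInner A C := by
  simp [hsInner, mul_add, Finset.sum_add_distrib]

lemma hsInner_sub_right (A B C : Matrix m k ℂ) :
    hsInner A (B - C) = hsInner A B - hsInner A C := by
  simp [hsInner, mul_sub, Finset.sum_sub_distrib]

lemma conj_hsInner (A B : Matrix m k ℂ) : conj (hsInner A B) = hsInner B A := by
  simp [hsInner, mul_comm]

lemma hsInner_smul_one_left [DecidableEq m] (c : ℂ) (B : Matrix m m ℂ) :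
    hsInner (c • 1) B = c * conj B.trace := by
  simp [hsInner, one_apply, trace, Finset.mul_sum]

lemma re_hsInner_self (A : Matrix m m ℂ) : (hsInner A A).re = frobNorm A ^ 2 := by
  rw [frobNorm, Real.sq_sqrt (by positivity)]
  simp [hsInner, Complex.mul_conj, Complex.re_sum, Complex.normSq_eq_norm_sq, -Complex.ofReal_pow]

lemma sum_mulVec_mul_conj (M : Matrix m m ℂ) (Ψ : m → ℂ) :
    ∑ i, (M *ᵥ Ψ) i * conj (Ψ i) = hsInner M (vecMulVec Ψ (star Ψ)) := by
  simp only [hsInner, mulVec, vecMulVec_apply, dotProduct, Finset.sum_mul, Pi.star_apply,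
    map_mul, Complex.conj_conj, RCLike.star_def]
  exact Finset.sum_congr rfl fun _ _ => Finset.sum_congr rfl fun _ _ => by ring

end HilbertSchmidt

section PartialTrace

variable {n : ℕ}

lemma hsInner_tens_one_right (hn : n ≠ 0) (M : Matrix (Fin 2 × Fin n) (Fin 2 × Fin n) ℂ)
    (B : Matrix (Fin 2) (Fin 2) ℂ) : hsInner M (tens B 1) = n * hsInner (ptr2 M) B := by
  have hn' : (n : ℂ) ≠ 0 := Nat.cast_ne_zero.2 hn
  simp [hsInner, ptr2, tens, Fintype.sum_prod_type, one_apply, apply_ite conj, Fin.sum_univ_two,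
    Finset.sum_add_distrib, ← Finset.sum_mul]
  field_simp

lemma hsInner_one_tens_right (M : Matrix (Fin 2 × Fin n) (Fin 2 × Fin n) ℂ)
    (D : Matrix (Fin n) (Fin n) ℂ) : hsInner M (tens 1 D) = 2 * hsInner (ptr1 M) D := by
  simp [hsInner, ptr1, tens, Fintype.sum_prod_type, one_apply, Fin.sum_univ_two, Finset.mul_sum,
    ← Finset.sum_add_distrib]
  exact Finset.sum_congr rfl fun _ _ => Finset.sum_congr rfl fun _ _ => by ring

lemma smul_one_eq_tens (c : ℂ) :
    (c • 1 : Matrix (Fin 2 × Fin n) (Fin 2 × Fin n) ℂ) = tens (c • 1) 1 := by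
  ext ⟨i, k⟩ ⟨j, l⟩
  by_cases hij : i = j <;> by_cases hkl : k = l <;> simp [tens, one_apply, hij, hkl]

lemma ptr2_sub (A B : Matrix (Fin 2 × Fin n) (Fin 2 × Fin n) ℂ) :
    ptr2 (A - B) = ptr2 A - ptr2 B := by
  ext i j
  simp [ptr2, Finset.sum_sub_distrib, mul_sub]

lemma ptr2_tens_one (hn : n ≠ 0) (B : Matrix (Fin 2) (Fin 2) ℂ) :
    ptr2 (tens B (1 : Matrix (Fin n) (Fin n) ℂ)) = B := by
  have hn' : (n : ℂ) ≠ 0 := Nat.cast_ne_zero.2 hn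
  ext i j
  simp [ptr2, tens, hn']

lemma ptr2_Pproj (hn : n ≠ 0) (A : Matrix (Fin 2 × Fin n) (Fin 2 × Fin n) ℂ) :
    ptr2 (Pproj A) = 0 := by
  have hn' : (n : ℂ) ≠ 0 := Nat.cast_ne_zero.2 hn
  ext i j
  fin_cases i <;> fin_cases j <;>
    simp [ptr2, ptr1, Pproj, tens, one_apply, trace, Fintype.sum_prod_type, Fin.sum_univ_two,
      Finset.sum_add_distrib, ← Finset.mul_sum, hn'] <;>
    field_simp <;> ring

lemma ptr1_Pproj (A : Matrix (Fin 2 × Fin n) (Fin 2 × Fin n) ℂ) : ptr1 (Pproj A) = 0 := by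
  ext k l
  by_cases hkl : k = l
  · subst hkl
    simp [ptr2, ptr1, Pproj, tens, one_apply, trace, Fintype.sum_prod_type, Fin.sum_univ_two,
      Finset.sum_add_distrib, ← Finset.mul_sum]
    ring
  · simp [ptr1, Pproj, tens, one_apply, hkl]

lemma hsInner_Pproj_self (hn : n ≠ 0) (A : Matrix (Fin 2 × Fin n) (Fin 2 × Fin n) ℂ) :
    hsInner (Pproj A) A = hsInner (Pproj A) (Pproj A) := by
  have hA : A - Pproj A = tens (ptr2 A) 1 + tens 1 (ptr1 A)
      - tens (((1 / (2 * (n : ℂ))) * A.trace) • 1) 1 := by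
    rw [← smul_one_eq_tens, Pproj]
    abel
  rw [← sub_eq_zero, ← hsInner_sub_right, hA, hsInner_sub_right, hsInner_add_right,
    hsInner_tens_one_right hn, hsInner_tens_one_right hn, hsInner_one_tens_right,
    ptr2_Pproj hn, ptr1_Pproj]
  simp [hsInner]

lemma hsInner_Qproj_self (hn : n ≠ 0) (A : Matrix (Fin 2 × Fin n) (Fin 2 × Fin n) ℂ) :
    hsInner (Qproj A) A = hsInner (Qproj A) (Qproj A) := by
  set B := ptr2 A - ((1 / 2) * (ptr2 A).trace) • (1 : Matrix (Fin 2) (Fin 2) ℂ) with hB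
  have hQ : Qproj A = tens B 1 := rfl
  have htrace : B.trace = 0 := by
    simp only [hB, trace_sub, trace_smul, trace_one, Fintype.card_fin, smul_eq_mul]
    ring
  rw [← sub_eq_zero, ← hsInner_sub_right, ← conj_hsInner, hQ, hsInner_tens_one_right hn,
    ptr2_sub, ptr2_tens_one hn, hB, sub_sub_cancel, hsInner_smul_one_left, ← hB, htrace]
  simp

end PartialTrace

/-- if `c > 0` satisfies `‖μ_{0,0}(Ψ)‖ ≥ c‖Ψ‖²` for all
`Ψ ∈ ℂ² ⊗ ℂⁿ` (with `n ≥ 2`), then for all `τ ≥ 0` and all `Ψ`,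
`⟨μ_{0,τ}(Ψ)Ψ, Ψ⟩ ≥ c²‖Ψ‖⁴`. -/
theorem stmt5 (n : ℕ) (hn : 2 ≤ n) (c : ℝ) (hc : 0 < c)
    (hbound : ∀ Ψ : Fin 2 × Fin n → ℂ,
      c * (∑ i, ‖Ψ i‖ ^ 2) ≤ frobNorm (Pproj (vecMulVec Ψ (star Ψ)))) :
    ∀ (τ : ℝ), 0 ≤ τ → ∀ Ψ : Fin 2 × Fin n → ℂ,
      c ^ 2 * (∑ i, ‖Ψ i‖ ^ 2) ^ 2
        ≤ (∑ i, ((Pproj (vecMulVec Ψ (star Ψ))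
              + (τ : ℂ) • Qproj (vecMulVec Ψ (star Ψ))).mulVec Ψ) i
            * (starRingEnd ℂ) (Ψ i)).re := by
  intro τ hτ Ψ
  have hn0 : n ≠ 0 := by omega
  set X := vecMulVec Ψ (star Ψ)
  have hP : (hsInner (Pproj X) X).re = frobNorm (Pproj X) ^ 2 := by
    rw [hsInner_Pproj_self hn0, re_hsInner_self]
  have hQ : 0 ≤ (hsInner (Qproj X) X).re := by
    rw [hsInner_Qproj_self hn0, re_hsInner_self]
    positivity
  rw [sum_mulVec_mul_conj, hsInner_add_left, hsInner_smul_left, Complex.add_re,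
    Complex.re_ofReal_mul, hP]
  calc c ^ 2 * (∑ i, ‖Ψ i‖ ^ 2) ^ 2 = (c * ∑ i, ‖Ψ i‖ ^ 2) ^ 2 := by ring
    _ ≤ frobNorm (Pproj X) ^ 2 := pow_le_pow_left₀ (by positivity) (hbound Ψ) 2
    _ ≤ _ := le_add_of_nonneg_right (mul_nonneg hτ hQ)
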